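/- Let D be a Swiss cheese with δ(D) > 0, and let C be a chain in the partially ordered set (S(D), ≥) of pairs (E, f) of Swiss cheeses above D together with allocation maps. Then C has an upper bound in S(D). -/

import Mathlib

/-- An open disc in the complex plane: a set of the form `B(z,r)` with `r > 0`. -/
def IsOpenDisc (D : Set ℂ) : Prop := ∃ z : ℂ, ∃ r : ℝ, 0 < r ∧ D = Metric.ball z r

/-- A closed disc in the complex plane: `{w : |w - z| ≤ r}` with `r > 0`. -/
def IsClosedDisc (D : Set ℂ) : Prop := ∃ z : ℂ, ∃ r : ℝ, 0 < r ∧ D = Metric.closedBall z r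

/-- The radius of a disc, computed as half its diameter (so `r = 0` for `∅` or singletons). -/
noncomputable def discRadius (D : Set ℂ) : ℝ := Metric.diam D / 2

/-- A Swiss cheese: a closed disc `Δ` together with a countable collection `𝒟` of open discs. -/
structure SwissCheese where
  Δ : Set ℂ
  𝒟 : Set (Set ℂ)
  hΔ : IsClosedDisc Δ
  h𝒟 : ∀ D ∈ 𝒟, IsOpenDisc D
  hcount : 𝒟.Countable

/-- `D̃ = 𝒟 ∪ {ℂ ∖ Δ}`. -/
def SwissCheese.tilde (D : SwissCheese) : Set (Set ℂ) := D.𝒟 ∪ {D.Δᶜ}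

/-- The associated Swiss cheese set `X_D = Δ ∖ ⋃ 𝒟`. -/
def SwissCheese.X (D : SwissCheese) : Set ℂ := D.Δ \ ⋃₀ D.𝒟

/-- The (possibly infinite) sum of the radii of a collection of discs. -/
noncomputable def radSum (S : Set (Set ℂ)) : ENNReal :=
  ∑' D : S, ENNReal.ofReal (discRadius D)

/-- `δ(D) = r(Δ) − Σ_{D'∈𝒟} r(D')`, possibly `−∞`. -/
noncomputable def SwissCheese.delta (D : SwissCheese) : EReal :=
  (discRadius D.Δ : EReal) - ((radSum D.𝒟 : ENNReal) : EReal)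

/-- An allocation map between Swiss cheeses. -/
structure IsAllocationMap (D E : SwissCheese) (f : Set ℂ → Set ℂ) : Prop where
  maps_to : ∀ U ∈ D.tilde, f U ∈ E.tilde
  a1 : ∀ U ∈ D.tilde, U ⊆ f U
  a2 : ENNReal.ofReal (discRadius D.Δ - discRadius E.Δ) ≤
      radSum {U | U ∈ D.𝒟 ∧ f U = E.Δᶜ}
  a3 : ∀ E' ∈ E.𝒟, ENNReal.ofReal (discRadius E') ≤ radSum {U | U ∈ D.𝒟 ∧ f U = E'}

/-- An element of `S(D)`: a Swiss cheese together with an allocation map from `D̃`. -/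
structure SPair (D : SwissCheese) where
  E : SwissCheese
  f : Set ℂ → Set ℂ
  hf : IsAllocationMap D E f

/-- `p ≥ q` in `S(D)`: there is an allocation map `g : q.Ẽ → p.Ẽ` with `g ∘ q.f = p.f`. -/
def SPair.ge {D : SwissCheese} (p q : SPair D) : Prop :=
  ∃ g : Set ℂ → Set ℂ, IsAllocationMap q.E p.E g ∧ ∀ U ∈ D.tilde, g (q.f U) = p.f U

open Metric Set Filter Topology

/-!
The bound of a chain `(Eᵢ, fᵢ)` has closed disc `⋂ Δ(Eᵢ)` and allocation map `U ↦ ⋃ fᵢ U`.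
Allocation maps only enlarge sets, so along the chain the discs `Δ(Eᵢ)` shrink and every
`fᵢ U` grows. Two nested discs satisfy `dist c c' + r ≤ r'`, which makes the centres of a chain
of discs converge; hence the intersection of a chain of closed discs is the closed disc of radius
`inf rᵢ`, and the union of a chain of open discs of bounded radii is the open disc of radius
`sup rᵢ`. By (A2) the radii of the `Δ(Eᵢ)` stay above `r(Δ) - Σ r(D') = δ(D) > 0`, and by (A3)
the radii of the discs of `Eᵢ` stay below `Σ r(D') < ∞`. Once some `fᵢ U` is `ℂ ∖ Δ(Eᵢ)`, so is
every later one and the union is `ℂ ∖ ⋂ Δ(Eᵢ)`. Since radii of the limit discs are infima and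
suprema, (A2) and (A3) for the limit follow from those of the members of the chain.
-/

section Geometry

variable {E : Type*} [NormedAddCommGroup E] [NormedSpace ℝ E] [Nontrivial E]

lemma exists_dist_eq_dist_add (x y : E) {t : ℝ} (ht : 0 ≤ t) :
    ∃ w : E, dist w x = t ∧ dist w y = dist x y + t := by
  obtain ⟨u, hu, hxy⟩ : ∃ u : E, ‖u‖ = 1 ∧ x - y = ‖x - y‖ • u := by
    by_cases h : x - y = 0
    · obtain ⟨u, hu⟩ := exists_norm_eq E zero_le_one
      exact ⟨u, hu, by simp [h]⟩
    · exact ⟨‖x - y‖⁻¹ • (x - y), norm_smul_inv_norm h,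
        (smul_inv_smul₀ (norm_ne_zero_iff.mpr h) _).symm⟩
  refine ⟨x + t • u, by simp [dist_eq_norm, norm_smul, hu, abs_of_nonneg ht], ?_⟩
  have : x + t • u - y = (‖x - y‖ + t) • u := by rw [add_smul, ← hxy]; abel
  rw [dist_eq_norm, this, norm_smul, hu, mul_one, Real.norm_of_nonneg (by positivity),
    dist_eq_norm]

lemma dist_add_le_of_closedBall_subset_closedBall {x y : E} {r s : ℝ} (hr : 0 ≤ r)
    (h : closedBall x r ⊆ closedBall y s) : dist x y + r ≤ s := by
  obtain ⟨w, hwx, hwy⟩ := exists_dist_eq_dist_add x y hr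
  exact hwy ▸ h hwx.le

lemma dist_add_le_of_ball_subset_ball {x y : E} {r s : ℝ} (hr : 0 < r)
    (h : ball x r ⊆ ball y s) : dist x y + r ≤ s := by
  refine dist_add_le_of_closedBall_subset_closedBall hr.le ?_
  rw [← closure_ball x hr.ne']
  exact (closure_mono h).trans closure_ball_subset_closedBall

end Geometry

lemma exists_dist_le_of_dist_le_add {α ι : Type*} [PseudoMetricSpace α] [CompleteSpace α]
    {z : ι → α} {a : ι → ℝ} (hz : ∀ i j, dist (z i) (z j) ≤ a i + a j)
    (ha : ∀ ε > 0, ∃ i, a i < ε) : ∃ c, ∀ i, dist (z i) c ≤ a i := by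
  choose s hs using fun n : ℕ => ha (1 / (n + 1)) Nat.one_div_pos_of_nat
  have hlim : Tendsto (fun n => a (s n)) atTop (𝓝 0) :=
    squeeze_zero (fun n => by linarith [hz (s n) (s n), dist_self (z (s n))])
      (fun n => (hs n).le) tendsto_one_div_add_atTop_nhds_zero_nat
  have hcauchy : CauchySeq (fun n => z (s n)) := by
    refine cauchySeq_of_le_tendsto_0' (fun n => a (s n) + 1 / (n + 1)) (fun n m hnm => ?_)
      (by simpa using hlim.add tendsto_one_div_add_atTop_nhds_zero_nat)
    have : (1 : ℝ) / (m + 1) ≤ 1 / (n + 1) := Nat.one_div_le_one_div hnm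
    linarith [hz (s n) (s m), hs m]
  obtain ⟨c, hc⟩ := cauchySeq_tendsto_of_complete hcauchy
  refine ⟨c, fun i => le_of_tendsto_of_tendsto' (tendsto_const_nhds.dist hc)
    (by simpa using tendsto_const_nhds.add hlim) fun n => hz i (s n)⟩

section Chains

variable {E : Type*} [NormedAddCommGroup E] [NormedSpace ℝ E] [Nontrivial E] [CompleteSpace E]
  {ι : Type*} [Nonempty ι] {z : ι → E} {r : ι → ℝ}

lemma exists_iInter_closedBall_eq (hr : ∀ i, 0 ≤ r i)
    (hch : ∀ i j, closedBall (z i) (r i) ⊆ closedBall (z j) (r j) ∨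
      closedBall (z j) (r j) ⊆ closedBall (z i) (r i)) :
    ∃ c, ⋂ i, closedBall (z i) (r i) = closedBall c (⨅ i, r i) := by
  have hbdd : BddBelow (range r) := ⟨0, by rintro _ ⟨i, rfl⟩; exact hr i⟩
  have hle : ∀ i, ⨅ j, r j ≤ r i := ciInf_le hbdd
  obtain ⟨c, hc⟩ : ∃ c, ∀ i, dist (z i) c ≤ r i - ⨅ j, r j := by
    refine exists_dist_le_of_dist_le_add (fun i j => ?_) fun ε hε => ?_
    · rcases hch i j with h | h
      · linarith [dist_add_le_of_closedBall_subset_closedBall (hr i) h, hle i]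
      · linarith [dist_add_le_of_closedBall_subset_closedBall (hr j) h, dist_comm (z i) (z j),
          hle j]
    · obtain ⟨i, hi⟩ := exists_lt_of_ciInf_lt (lt_add_of_pos_right (⨅ j, r j) hε)
      exact ⟨i, by linarith⟩
  refine ⟨c, Subset.antisymm (fun w hw => ?_) fun w hw => mem_iInter.mpr fun i => ?_⟩
  · rw [mem_closedBall]
    refine le_of_forall_pos_lt_add fun ε hε => ?_
    obtain ⟨i, hi⟩ := exists_lt_of_ciInf_lt (lt_add_of_pos_right (⨅ j, r j) (half_pos hε))
    have hwi : dist w (z i) ≤ r i := mem_iInter.mp hw i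
    linarith [dist_triangle w (z i) c, hc i]
  · rw [mem_closedBall] at hw ⊢
    linarith [dist_triangle w c (z i), dist_comm c (z i), hc i]

lemma exists_iUnion_ball_eq (hr : ∀ i, 0 < r i) (hbdd : BddAbove (range r))
    (hch : ∀ i j, ball (z i) (r i) ⊆ ball (z j) (r j) ∨ ball (z j) (r j) ⊆ ball (z i) (r i)) :
    ∃ c, ⋃ i, ball (z i) (r i) = ball c (⨆ i, r i) := by
  have hle : ∀ i, r i ≤ ⨆ j, r j := le_ciSup hbdd
  obtain ⟨c, hc⟩ : ∃ c, ∀ i, dist (z i) c ≤ (⨆ j, r j) - r i := by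
    refine exists_dist_le_of_dist_le_add (fun i j => ?_) fun ε hε => ?_
    · rcases hch i j with h | h
      · linarith [dist_add_le_of_ball_subset_ball (hr i) h, hle j]
      · linarith [dist_add_le_of_ball_subset_ball (hr j) h, dist_comm (z i) (z j), hle i]
    · obtain ⟨i, hi⟩ := exists_lt_of_lt_ciSup (sub_lt_self (⨆ j, r j) hε)
      exact ⟨i, by linarith⟩
  refine ⟨c, Subset.antisymm (iUnion_subset fun i w hw => ?_) fun w hw => ?_⟩
  · rw [mem_ball] at hw ⊢
    linarith [dist_triangle w (z i) c, hc i]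
  · rw [mem_ball] at hw
    obtain ⟨i, hi⟩ := exists_lt_of_lt_ciSup (show ((⨆ j, r j) + dist w c) / 2 < ⨆ j, r j by
      linarith)
    refine mem_iUnion.mpr ⟨i, ?_⟩
    rw [mem_ball]
    linarith [dist_triangle w c (z i), dist_comm c (z i), hc i]

end Chains

lemma discRadius_ball (z : ℂ) {r : ℝ} (hr : 0 ≤ r) : discRadius (ball z r) = r := by
  simp [discRadius, diam_ball_eq z hr]

lemma discRadius_closedBall (z : ℂ) {r : ℝ} (hr : 0 ≤ r) : discRadius (closedBall z r) = r := by
  simp [discRadius, diam_closedBall_eq z hr]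

lemma discRadius_mono {V W : Set ℂ} (h : V ⊆ W) (hW : Bornology.IsBounded W) :
    discRadius V ≤ discRadius W :=
  div_le_div_of_nonneg_right (diam_mono h hW) zero_le_two

lemma IsOpenDisc.isBounded {U : Set ℂ} (hU : IsOpenDisc U) : Bornology.IsBounded U := by
  obtain ⟨z, r, -, rfl⟩ := hU
  exact isBounded_ball

lemma IsOpenDisc.discRadius_pos {U : Set ℂ} (hU : IsOpenDisc U) : 0 < discRadius U := by
  obtain ⟨z, r, hr, rfl⟩ := hU
  rwa [discRadius_ball z hr.le]

lemma IsClosedDisc.isBounded {K : Set ℂ} (hK : IsClosedDisc K) : Bornology.IsBounded K := by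
  obtain ⟨z, r, -, rfl⟩ := hK
  exact isBounded_closedBall

lemma IsClosedDisc.iInter {ι : Type*} [Nonempty ι] {K : ι → Set ℂ} (hK : ∀ i, IsClosedDisc (K i))
    (hch : ∀ i j, K i ⊆ K j ∨ K j ⊆ K i) {ρ : ℝ} (hρ : 0 < ρ) (hle : ∀ i, ρ ≤ discRadius (K i)) :
    IsClosedDisc (⋂ i, K i) ∧ discRadius (⋂ i, K i) = ⨅ i, discRadius (K i) := by
  choose z r hr hKi using hK
  obtain rfl : K = fun i => closedBall (z i) (r i) := funext hKi
  have hrad : ∀ i, discRadius (closedBall (z i) (r i)) = r i :=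
    fun i => discRadius_closedBall _ (hr i).le
  simp only [hrad] at hle ⊢
  obtain ⟨c, hc⟩ := exists_iInter_closedBall_eq (fun i => (hr i).le) hch
  have hρinf : ρ ≤ ⨅ i, r i := le_ciInf hle
  rw [hc, discRadius_closedBall c (hρ.le.trans hρinf)]
  exact ⟨⟨c, _, hρ.trans_le hρinf, rfl⟩, rfl⟩

lemma IsOpenDisc.iUnion {ι : Type*} [Nonempty ι] {U : ι → Set ℂ} (hU : ∀ i, IsOpenDisc (U i))
    (hch : ∀ i j, U i ⊆ U j ∨ U j ⊆ U i) (hbdd : BddAbove (range fun i => discRadius (U i))) :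
    IsOpenDisc (⋃ i, U i) ∧ discRadius (⋃ i, U i) = ⨆ i, discRadius (U i) := by
  choose z r hr hUi using hU
  obtain rfl : U = fun i => ball (z i) (r i) := funext hUi
  have hrad : ∀ i, discRadius (ball (z i) (r i)) = r i := fun i => discRadius_ball _ (hr i).le
  simp only [hrad] at hbdd ⊢
  obtain ⟨c, hc⟩ := exists_iUnion_ball_eq hr hbdd hch
  have hsup : 0 < ⨆ i, r i := (hr (Classical.arbitrary ι)).trans_le (le_ciSup hbdd _)
  rw [hc, discRadius_ball c hsup.le]
  exact ⟨⟨c, _, hsup, rfl⟩, rfl⟩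

lemma radSum_mono {S T : Set (Set ℂ)} (h : S ⊆ T) : radSum S ≤ radSum T :=
  ENNReal.tsum_comp_le_tsum_of_injective (inclusion_injective h) _

lemma ofReal_discRadius_le_radSum {S : Set (Set ℂ)} {V : Set ℂ} (h : V ∈ S) :
    ENNReal.ofReal (discRadius V) ≤ radSum S :=
  ENNReal.le_tsum (⟨V, h⟩ : S)

lemma ENNReal.ofReal_le_of_forall_lt {a : ℝ} {L : ENNReal}
    (h : ∀ b < a, ENNReal.ofReal b ≤ L) : ENNReal.ofReal a ≤ L := by
  refine le_of_forall_lt_imp_le_of_dense fun c hc => ?_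
  have hc_top : c ≠ ⊤ := hc.ne_top
  rw [ENNReal.lt_ofReal_iff_toReal_lt hc_top] at hc
  simpa [ENNReal.ofReal_toReal hc_top] using h _ hc

namespace SwissCheese

variable (A : SwissCheese)

lemma compl_Δ_mem_tilde : A.Δᶜ ∈ A.tilde := Or.inr rfl

lemma not_isBounded_compl_Δ : ¬ Bornology.IsBounded A.Δᶜ := fun h =>
  NormedSpace.unbounded_univ ℝ ℂ (union_compl_self A.Δ ▸ A.hΔ.isBounded.union h)

variable {A}

lemma eq_compl_Δ_of_mem_tilde {V : Set ℂ} (hV : V ∈ A.tilde) (h : ¬ Bornology.IsBounded V) :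
    V = A.Δᶜ :=
  hV.resolve_left fun hV' => h (A.h𝒟 V hV').isBounded

lemma radSum_ne_top_of_delta_pos (hδ : 0 < A.delta) : radSum A.𝒟 ≠ ⊤ := by
  intro h
  rw [SwissCheese.delta, h, EReal.coe_ennreal_top, EReal.sub_top] at hδ
  exact not_lt_bot hδ

lemma toReal_radSum_lt_of_delta_pos (hδ : 0 < A.delta) : (radSum A.𝒟).toReal < discRadius A.Δ := by
  have hcoe := EReal.coe_toReal (x := (radSum A.𝒟 : EReal))
    (by simpa using radSum_ne_top_of_delta_pos hδ) (EReal.coe_ennreal_ne_bot _)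
  rw [SwissCheese.delta, ← hcoe, ← EReal.coe_sub, EReal.coe_pos] at hδ
  simpa using hδ

end SwissCheese

namespace IsAllocationMap

variable {A B : SwissCheese} {f : Set ℂ → Set ℂ}

lemma id (A : SwissCheese) : IsAllocationMap A A id where
  maps_to _ hU := hU
  a1 _ _ := subset_rfl
  a2 := by simp
  a3 _ hE' := ofReal_discRadius_le_radSum ⟨hE', rfl⟩

lemma map_compl_Δ (hf : IsAllocationMap A B f) : f A.Δᶜ = B.Δᶜ :=
  SwissCheese.eq_compl_Δ_of_mem_tilde (hf.maps_to _ A.compl_Δ_mem_tilde) fun h =>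
    A.not_isBounded_compl_Δ (h.subset (hf.a1 _ A.compl_Δ_mem_tilde))

lemma Δ_subset (hf : IsAllocationMap A B f) : B.Δ ⊆ A.Δ :=
  compl_subset_compl.mp (hf.map_compl_Δ ▸ hf.a1 _ A.compl_Δ_mem_tilde)

lemma surjOn (hf : IsAllocationMap A B f) : SurjOn f A.tilde B.tilde := by
  rintro W (hW | rfl)
  · by_contra h
    have hfiber : {U | U ∈ A.𝒟 ∧ f U = W} = ∅ :=
      eq_empty_of_forall_notMem fun U hU => h ⟨U, Or.inl hU.1, hU.2⟩
    have := hf.a3 W hW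
    rw [hfiber, radSum, tsum_empty, nonpos_iff_eq_zero, ENNReal.ofReal_eq_zero] at this
    exact (B.h𝒟 W hW).discRadius_pos.not_ge this
  · exact ⟨A.Δᶜ, A.compl_Δ_mem_tilde, hf.map_compl_Δ⟩

lemma sub_discRadius_le_toReal_radSum (hf : IsAllocationMap A B f) (hA : radSum A.𝒟 ≠ ⊤) :
    discRadius A.Δ - discRadius B.Δ ≤ (radSum A.𝒟).toReal :=
  (ENNReal.ofReal_le_iff_le_toReal hA).mp (hf.a2.trans (radSum_mono fun _ hU => hU.1))

lemma discRadius_le_toReal_radSum (hf : IsAllocationMap A B f) (hA : radSum A.𝒟 ≠ ⊤)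
    {W : Set ℂ} (hW : W ∈ B.𝒟) : discRadius W ≤ (radSum A.𝒟).toReal :=
  (ENNReal.ofReal_le_iff_le_toReal hA).mp ((hf.a3 W hW).trans (radSum_mono fun _ hU => hU.1))

end IsAllocationMap

namespace SPair

variable {D : SwissCheese} {p q : SPair D} {U U' : Set ℂ}

lemma ge_refl (p : SPair D) : p.ge p := ⟨id, .id _, fun _ _ => rfl⟩

instance : Std.Refl (@SPair.ge D) := ⟨ge_refl⟩

lemma ge.Δ_subset (h : q.ge p) : q.E.Δ ⊆ p.E.Δ :=
  h.elim fun _ hg => hg.1.Δ_subset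

lemma ge.f_subset (h : q.ge p) (hU : U ∈ D.tilde) : p.f U ⊆ q.f U := by
  obtain ⟨g, hg, hgf⟩ := h
  exact hgf U hU ▸ hg.a1 _ (p.hf.maps_to U hU)

lemma ge.f_eq_compl_Δ (h : q.ge p) (hU : U ∈ D.tilde) (hpU : p.f U = p.E.Δᶜ) :
    q.f U = q.E.Δᶜ := by
  obtain ⟨g, hg, hgf⟩ := h
  rw [← hgf U hU, hpU, hg.map_compl_Δ]

lemma ge.f_congr (h : q.ge p) (hU : U ∈ D.tilde) (hU' : U' ∈ D.tilde) (hpU : p.f U = p.f U') :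
    q.f U = q.f U' := by
  obtain ⟨g, -, hgf⟩ := h
  rw [← hgf U hU, ← hgf U' hU', hpU]

end SPair

section Chain

variable {D : SwissCheese} (C : Set (SPair D))

def chainΔ : Set ℂ := ⋂ p : C, (p : SPair D).E.Δ

def chainMap (U : Set ℂ) : Set ℂ := ⋃ p : C, (p : SPair D).f U

variable {C} {p : SPair D} {U U' : Set ℂ}

lemma chainΔ_subset (hp : p ∈ C) : chainΔ C ⊆ p.E.Δ := iInter_subset_of_subset ⟨p, hp⟩ subset_rfl

lemma f_subset_chainMap (hp : p ∈ C) : p.f U ⊆ chainMap C U :=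
  subset_iUnion_of_subset ⟨p, hp⟩ subset_rfl

lemma chainMap_eq_compl_chainΔ (hC : IsChain SPair.ge C) (hp : p ∈ C) (hU : U ∈ D.tilde)
    (hpU : p.f U = p.E.Δᶜ) : chainMap C U = (chainΔ C)ᶜ := by
  refine Subset.antisymm (iUnion_subset fun ⟨q, hq⟩ => ?_) fun x hx => ?_
  · rcases hC.total hq hp with hqp | hpq
    · rw [hqp.f_eq_compl_Δ hU hpU]
      exact compl_subset_compl.mpr (chainΔ_subset hq)
    · exact (hpq.f_subset hU).trans (hpU ▸ compl_subset_compl.mpr (chainΔ_subset hp))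
  · obtain ⟨⟨q, hq⟩, hxq⟩ : ∃ q : C, x ∉ (q : SPair D).E.Δ := by
      simpa [chainΔ] using hx
    rcases hC.total hq hp with hqp | hpq
    · exact f_subset_chainMap hq ((hqp.f_eq_compl_Δ hU hpU).symm ▸ hxq)
    · exact f_subset_chainMap hp (hpU ▸ fun hxp => hxq (hpq.Δ_subset hxp))

lemma chainMap_compl_Δ (hC : IsChain SPair.ge C) (hp : p ∈ C) :
    chainMap C D.Δᶜ = (chainΔ C)ᶜ :=
  chainMap_eq_compl_chainΔ hC hp D.compl_Δ_mem_tilde p.hf.map_compl_Δ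

lemma chainMap_subset_of_eq (hC : IsChain SPair.ge C) (hp : p ∈ C) (hU : U ∈ D.tilde)
    (hU' : U' ∈ D.tilde) (hpU : p.f U = p.f U') : chainMap C U ⊆ chainMap C U' := by
  refine iUnion_subset fun ⟨q, hq⟩ => ?_
  rcases hC.total hq hp with hqp | hpq
  · exact (hqp.f_congr hU hU' hpU).symm ▸ f_subset_chainMap hq
  · exact (hpq.f_subset hU).trans (hpU ▸ f_subset_chainMap hp)

lemma chainMap_congr (hC : IsChain SPair.ge C) (hp : p ∈ C) (hU : U ∈ D.tilde)
    (hU' : U' ∈ D.tilde) (hpU : p.f U = p.f U') : chainMap C U = chainMap C U' :=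
  (chainMap_subset_of_eq hC hp hU hU' hpU).antisymm
    (chainMap_subset_of_eq hC hp hU' hU hpU.symm)

lemma f_mem_𝒟_of_chainMap_ne (hC : IsChain SPair.ge C) (hp : p ∈ C) (hU : U ∈ D.tilde)
    (hUC : chainMap C U ≠ (chainΔ C)ᶜ) : p.f U ∈ p.E.𝒟 :=
  (p.hf.maps_to U hU).resolve_right fun hpU => hUC (chainMap_eq_compl_chainΔ hC hp hU hpU)

lemma isClosedDisc_chainΔ (hδ : 0 < D.delta) (hC : IsChain SPair.ge C) (hne : C.Nonempty) :
    IsClosedDisc (chainΔ C) ∧ discRadius (chainΔ C) = ⨅ p : C, discRadius (p : SPair D).E.Δ := by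
  have : Nonempty C := hne.to_subtype
  refine IsClosedDisc.iInter (fun p => (p : SPair D).E.hΔ)
    (fun p q => (hC.total p.2 q.2).imp SPair.ge.Δ_subset SPair.ge.Δ_subset)
    (sub_pos.mpr (D.toReal_radSum_lt_of_delta_pos hδ)) fun p => ?_
  linarith [(p : SPair D).hf.sub_discRadius_le_toReal_radSum (D.radSum_ne_top_of_delta_pos hδ)]

lemma isOpenDisc_chainMap (hD : radSum D.𝒟 ≠ ⊤) (hC : IsChain SPair.ge C) (hne : C.Nonempty)
    (hU : U ∈ D.tilde) (hUC : chainMap C U ≠ (chainΔ C)ᶜ) :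
    IsOpenDisc (chainMap C U) ∧
      discRadius (chainMap C U) = ⨆ p : C, discRadius ((p : SPair D).f U) := by
  have : Nonempty C := hne.to_subtype
  have hmem : ∀ p : C, (p : SPair D).f U ∈ (p : SPair D).E.𝒟 :=
    fun p => f_mem_𝒟_of_chainMap_ne hC p.2 hU hUC
  exact IsOpenDisc.iUnion (fun p => (p : SPair D).E.h𝒟 _ (hmem p))
    (fun p q => (hC.total q.2 p.2).imp (·.f_subset hU) (·.f_subset hU))
    ⟨_, forall_mem_range.mpr fun p => (p : SPair D).hf.discRadius_le_toReal_radSum hD (hmem p)⟩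

end Chain

section UpperBound

variable {D : SwissCheese} {C : Set (SPair D)} {p : SPair D} {U : Set ℂ}

lemma exists_ge_discRadius_Δ_lt (hδ : 0 < D.delta) (hC : IsChain SPair.ge C) (hp : p ∈ C) {b : ℝ}
    (hb : discRadius (chainΔ C) < b) : ∃ q ∈ C, q.ge p ∧ discRadius q.E.Δ < b := by
  have : Nonempty C := ⟨⟨p, hp⟩⟩
  rw [(isClosedDisc_chainΔ hδ hC ⟨p, hp⟩).2] at hb
  obtain ⟨⟨q, hq⟩, hqb⟩ := exists_lt_of_ciInf_lt hb
  rcases hC.total hq hp with hqp | hpq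
  · exact ⟨q, hq, hqp, hqb⟩
  · exact ⟨p, hp, p.ge_refl, (discRadius_mono hpq.Δ_subset q.E.hΔ.isBounded).trans_lt hqb⟩

lemma exists_ge_lt_discRadius_f (hD : radSum D.𝒟 ≠ ⊤) (hC : IsChain SPair.ge C) (hp : p ∈ C)
    (hU : U ∈ D.tilde) (hUC : chainMap C U ≠ (chainΔ C)ᶜ) {b : ℝ}
    (hb : b < discRadius (chainMap C U)) : ∃ q ∈ C, q.ge p ∧ b < discRadius (q.f U) := by
  have : Nonempty C := ⟨⟨p, hp⟩⟩
  rw [(isOpenDisc_chainMap hD hC ⟨p, hp⟩ hU hUC).2] at hb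
  obtain ⟨⟨q, hq⟩, hqb⟩ := exists_lt_of_lt_ciSup hb
  rcases hC.total hq hp with hqp | hpq
  · exact ⟨q, hq, hqp, hqb⟩
  · refine ⟨p, hp, p.ge_refl, hqb.trans_le (discRadius_mono (hpq.f_subset hU) ?_)⟩
    exact (p.E.h𝒟 _ (f_mem_𝒟_of_chainMap_ne hC hp hU hUC)).isBounded

variable (C) in
/-- `p.f` maps `D̃` onto `p.Ẽ`, and `chainMap C` is constant on its fibres (`chainMap_congr`). -/
def chainLift (p : SPair D) : Set ℂ → Set ℂ := chainMap C ∘ Function.invFunOn p.f D.tilde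

lemma chainLift_f (hC : IsChain SPair.ge C) (hp : p ∈ C) (hU : U ∈ D.tilde) :
    chainLift C p (p.f U) = chainMap C U :=
  chainMap_congr hC hp (Function.invFunOn_mem ⟨U, hU, rfl⟩) hU (Function.invFunOn_eq ⟨U, hU, rfl⟩)

lemma fiber_subset_fiber_chainLift (hC : IsChain SPair.ge C) (hp : p ∈ C) {q : SPair D}
    (hq : q ∈ C) {g : Set ℂ → Set ℂ} (hgf : ∀ U ∈ D.tilde, g (p.f U) = q.f U)
    (hU : U ∈ D.tilde) :
    {W | W ∈ p.E.𝒟 ∧ g W = q.f U} ⊆ {W | W ∈ p.E.𝒟 ∧ chainLift C p W = chainMap C U} := by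
  rintro W ⟨hW, hgW⟩
  obtain ⟨U', hU', rfl⟩ := p.hf.surjOn (Or.inl hW)
  refine ⟨hW, (chainLift_f hC hp hU').trans (chainMap_congr hC hq hU' hU ?_)⟩
  rw [← hgf U' hU', hgW]

variable (C) in
def chainDiscs : Set (Set ℂ) := chainMap C '' D.𝒟 \ {(chainΔ C)ᶜ}

variable (hδ : 0 < D.delta) (hC : IsChain SPair.ge C) (hne : C.Nonempty)

def chainCheese : SwissCheese where
  Δ := chainΔ C
  𝒟 := chainDiscs C
  hΔ := (isClosedDisc_chainΔ hδ hC hne).1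
  h𝒟 := by
    rintro _ ⟨⟨U, hU, rfl⟩, hUC⟩
    exact (isOpenDisc_chainMap (D.radSum_ne_top_of_delta_pos hδ) hC hne (Or.inl hU) hUC).1
  hcount := (D.hcount.image _).mono sdiff_subset

lemma chainMap_mem_tilde (hU : U ∈ D.tilde) : chainMap C U ∈ (chainCheese hδ hC hne).tilde := by
  by_cases hUC : chainMap C U = (chainΔ C)ᶜ
  · exact Or.inr hUC
  · rcases hU with hU | rfl
    · exact Or.inl ⟨⟨U, hU, rfl⟩, hUC⟩
    · exact absurd (chainMap_compl_Δ hC hne.some_mem) hUC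

lemma isAllocationMap_chainMap : IsAllocationMap D (chainCheese hδ hC hne) (chainMap C) where
  maps_to _ hU := chainMap_mem_tilde hδ hC hne hU
  a1 U hU := (hne.some.hf.a1 U hU).trans (f_subset_chainMap hne.some_mem)
  a2 := by
    refine ENNReal.ofReal_le_of_forall_lt fun b hb => ?_
    change b < discRadius D.Δ - discRadius (chainΔ C) at hb
    obtain ⟨q, hq, -, hqb⟩ :=
      exists_ge_discRadius_Δ_lt hδ hC hne.some_mem (show _ < discRadius D.Δ - b by linarith)
    calc ENNReal.ofReal b ≤ ENNReal.ofReal (discRadius D.Δ - discRadius q.E.Δ) :=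
          ENNReal.ofReal_le_ofReal (by linarith)
      _ ≤ radSum {U | U ∈ D.𝒟 ∧ q.f U = q.E.Δᶜ} := q.hf.a2
      _ ≤ radSum {U | U ∈ D.𝒟 ∧ chainMap C U = (chainΔ C)ᶜ} := radSum_mono fun U hU =>
          ⟨hU.1, chainMap_eq_compl_chainΔ hC hq (Or.inl hU.1) hU.2⟩
  a3 := by
    rintro _ ⟨⟨U₀, hU₀, rfl⟩, hU₀C⟩
    refine ENNReal.ofReal_le_of_forall_lt fun b hb => ?_
    obtain ⟨q, hq, -, hqb⟩ := exists_ge_lt_discRadius_f (D.radSum_ne_top_of_delta_pos hδ) hC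
      hne.some_mem (Or.inl hU₀) hU₀C hb
    calc ENNReal.ofReal b ≤ ENNReal.ofReal (discRadius (q.f U₀)) := ENNReal.ofReal_le_ofReal hqb.le
      _ ≤ radSum {U | U ∈ D.𝒟 ∧ q.f U = q.f U₀} :=
          q.hf.a3 _ (f_mem_𝒟_of_chainMap_ne hC hq (Or.inl hU₀) hU₀C)
      _ ≤ radSum {U | U ∈ D.𝒟 ∧ chainMap C U = chainMap C U₀} := radSum_mono fun U hU =>
          ⟨hU.1, chainMap_congr hC hq (Or.inl hU.1) (Or.inl hU₀) hU.2⟩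

def chainSPair : SPair D := ⟨chainCheese hδ hC hne, chainMap C, isAllocationMap_chainMap hδ hC hne⟩

lemma isAllocationMap_chainLift (hp : p ∈ C) :
    IsAllocationMap p.E (chainCheese hδ hC hne) (chainLift C p) where
  maps_to W hW := by
    obtain ⟨U, hU, rfl⟩ := p.hf.surjOn hW
    exact chainLift_f hC hp hU ▸ chainMap_mem_tilde hδ hC hne hU
  a1 W hW := by
    obtain ⟨U, hU, rfl⟩ := p.hf.surjOn hW
    exact chainLift_f hC hp hU ▸ f_subset_chainMap hp
  a2 := by
    refine ENNReal.ofReal_le_of_forall_lt fun b hb => ?_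
    change b < discRadius p.E.Δ - discRadius (chainΔ C) at hb
    obtain ⟨q, hq, ⟨g, hg, hgf⟩, hqb⟩ :=
      exists_ge_discRadius_Δ_lt hδ hC hp (show _ < discRadius p.E.Δ - b by linarith)
    have hfiber := fiber_subset_fiber_chainLift hC hp hq hgf D.compl_Δ_mem_tilde
    rw [q.hf.map_compl_Δ, chainMap_compl_Δ hC hp] at hfiber
    calc ENNReal.ofReal b ≤ ENNReal.ofReal (discRadius p.E.Δ - discRadius q.E.Δ) :=
          ENNReal.ofReal_le_ofReal (by linarith)
      _ ≤ radSum {W | W ∈ p.E.𝒟 ∧ g W = q.E.Δᶜ} := hg.a2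
      _ ≤ radSum {W | W ∈ p.E.𝒟 ∧ chainLift C p W = (chainΔ C)ᶜ} := radSum_mono hfiber
  a3 := by
    rintro _ ⟨⟨U₀, hU₀, rfl⟩, hU₀C⟩
    refine ENNReal.ofReal_le_of_forall_lt fun b hb => ?_
    obtain ⟨q, hq, ⟨g, hg, hgf⟩, hqb⟩ := exists_ge_lt_discRadius_f
      (D.radSum_ne_top_of_delta_pos hδ) hC hp (Or.inl hU₀) hU₀C hb
    calc ENNReal.ofReal b ≤ ENNReal.ofReal (discRadius (q.f U₀)) := ENNReal.ofReal_le_ofReal hqb.le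
      _ ≤ radSum {W | W ∈ p.E.𝒟 ∧ g W = q.f U₀} :=
          hg.a3 _ (f_mem_𝒟_of_chainMap_ne hC hq (Or.inl hU₀) hU₀C)
      _ ≤ radSum {W | W ∈ p.E.𝒟 ∧ chainLift C p W = chainMap C U₀} :=
          radSum_mono (fiber_subset_fiber_chainLift hC hp hq hgf (Or.inl hU₀))

lemma chainSPair_ge (hp : p ∈ C) : (chainSPair hδ hC hne).ge p :=
  ⟨chainLift C p, isAllocationMap_chainLift hδ hC hne hp, fun _ hU => chainLift_f hC hp hU⟩

end UpperBound

theorem chain_has_upper_bound (D : SwissCheese) (hδ : 0 < D.delta)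
    (C : Set (SPair D)) (hC : IsChain SPair.ge C) :
    ∃ ub : SPair D, ∀ p ∈ C, SPair.ge ub p := by
  rcases C.eq_empty_or_nonempty with rfl | hne
  · exact ⟨⟨D, id, .id D⟩, fun _ hp => hp.elim⟩
  · exact ⟨chainSPair hδ hC hne, fun _ hp => chainSPair_ge hδ hC hne hp⟩
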